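/- arXiv:1111.6759 — 4 statements merged into one kernel-verified Lean document; each statement's English description precedes it below -/
import Mathlib

section
/- Let Δ_⊛ : k⟨Y⟩ → k⟨Y⟩ ⊗ k⟨Y⟩ be the algebra morphism (for the concatenation product) determined on letters by Δ_⊛(y_n) = y_n ⊗ 1 + 1 ⊗ y_n + Σ_{p+q=n, p,q≥1} y_p ⊗ y_q. Then for all words u, v, w ∈ Y*, the coefficient ⟨u ⊛ v, w⟩ of w in the stuffle product u ⊛ v equals ⟨u ⊗ v, Δ_⊛(w)⟩, i.e. Δ_⊛ is the coproduct dual to the stuffle product. -/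
/-- The stuffle product of two words over the alphabet `Y = {y_i}_{i ≥ 1}` (letters
indexed by positive integers), with values in the free `K`-module `K⟨Y⟩` on words,
defined by `u ⊛ 1 = 1 ⊛ u = u` and
`y_i u ⊛ y_j v = y_i (u ⊛ y_j v) + y_j (y_i u ⊛ v) + y_{i+j} (u ⊛ v)`. -/
noncomputable def stuffleWord (K : Type*) [Field K] :
    List ℕ+ → List ℕ+ → (List ℕ+ →₀ K)
  | [], v => Finsupp.single v 1
  | u, [] => Finsupp.single u 1
  | i :: u, j :: v =>
      Finsupp.mapDomain (i :: ·) (stuffleWord K u (j :: v)) +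
      Finsupp.mapDomain (j :: ·) (stuffleWord K (i :: u) v) +
      Finsupp.mapDomain ((i + j) :: ·) (stuffleWord K u v)
  termination_by u v => u.length + v.length

/-- Bilinear extension of the stuffle product to `K⟨Y⟩`. -/
noncomputable def stuffleF (K : Type*) [Field K] (f g : List ℕ+ →₀ K) :
    List ℕ+ →₀ K :=
  f.sum fun u a => g.sum fun v b => (a * b) • stuffleWord K u v

/-- Multiplication on `K⟨Y⟩ ⊗ K⟨Y⟩` (basis: pairs of words), componentwise
concatenation, extended bilinearly. -/
noncomputable def mulPair (K : Type*) [Field K]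
    (f g : (List ℕ+ × List ℕ+) →₀ K) : (List ℕ+ × List ℕ+) →₀ K :=
  f.sum fun p a => g.sum fun q b =>
    (a * b) • Finsupp.single (p.1 ++ q.1, p.2 ++ q.2) 1

/-- `Δ_⊛ (y_n) = y_n ⊗ 1 + 1 ⊗ y_n + Σ_{p+q=n, p,q ≥ 1} y_p ⊗ y_q`. -/
noncomputable def deltaLetter (K : Type*) [Field K] (n : ℕ+) :
    (List ℕ+ × List ℕ+) →₀ K :=
  Finsupp.single ([n], []) 1 + Finsupp.single ([], [n]) 1 +
    ∑ p ∈ Finset.Iio n, Finsupp.single ([p], [n - p]) 1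

/-- `Δ_⊛` on words: the unique extension of `deltaLetter` as a morphism for the
concatenation product, `Δ_⊛(y_n w) = Δ_⊛(y_n) Δ_⊛(w)`. -/
noncomputable def deltaWord (K : Type*) [Field K] :
    List ℕ+ → ((List ℕ+ × List ℕ+) →₀ K)
  | [] => Finsupp.single ([], []) 1
  | n :: w => mulPair K (deltaLetter K n) (deltaWord K w)

/-! Both sides satisfy the recursion defining the stuffle product. The coefficient of `y_n w` in
`y_i u ⊛ y_j v` is `[i = n] ⟨u ⊛ y_j v, w⟩ + [j = n] ⟨y_i u ⊛ v, w⟩ + [i + j = n] ⟨u ⊛ v, w⟩`,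
and since every term of `Δ_⊛(y_n)` prepends at most one letter to each tensor factor, the
coefficient of `y_i u ⊗ y_j v` in `Δ_⊛(y_n w) = Δ_⊛(y_n) Δ_⊛(w)` splits in exactly the same way.
When `u` or `v` is empty both sides are the Kronecker delta, so induction along the recursion
of `⊛` concludes. -/

namespace Finsupp

variable {α M : Type*} [AddCommMonoid M]

theorem mapDomain_cons_apply_nil (a : α) (f : List α →₀ M) :
    mapDomain (a :: ·) f [] = 0 :=
  mapDomain_of_notMem_range _ _ fun ⟨_, h⟩ => List.cons_ne_nil _ _ h

theorem mapDomain_cons_apply_cons [DecidableEq α] (a b : α) (f : List α →₀ M)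
    (l : List α) : mapDomain (a :: ·) f (b :: l) = if a = b then f l else 0 := by
  split_ifs with hab
  · subst hab
    exact mapDomain_apply List.cons_injective f l
  · exact mapDomain_of_notMem_range _ _ fun ⟨_, h⟩ => hab (List.cons.inj h).1

theorem mapDomain_append_pair_apply [DecidableEq α] (l₁ l₂ : List α)
    (g : List α × List α →₀ M) (x : List α × List α) :
    mapDomain (fun q => (l₁ ++ q.1, l₂ ++ q.2)) g x =
      if l₁ <+: x.1 ∧ l₂ <+: x.2 then g (x.1.drop l₁.length, x.2.drop l₂.length)
      else 0 := by
  split_ifs with h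
  · obtain ⟨h₁, h₂⟩ := h
    have hinj : Function.Injective fun q : List α × List α => (l₁ ++ q.1, l₂ ++ q.2) :=
      fun q q' hq => Prod.ext (List.append_cancel_left (Prod.mk.inj hq).1)
        (List.append_cancel_left (Prod.mk.inj hq).2)
    conv_lhs => rw [← Prod.mk.eta (p := x), ← List.prefix_iff_eq_append.mp h₁,
      ← List.prefix_iff_eq_append.mp h₂]
    exact mapDomain_apply hinj g (x.1.drop l₁.length, x.2.drop l₂.length)
  · refine mapDomain_of_notMem_range _ _ ?_
    rintro ⟨q, rfl⟩
    exact h ⟨List.prefix_append _ _, List.prefix_append _ _⟩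

end Finsupp

section Coproduct

variable {K : Type*} [Field K]

theorem mulPair_add_left (f₁ f₂ g : (List ℕ+ × List ℕ+) →₀ K) :
    mulPair K (f₁ + f₂) g = mulPair K f₁ g + mulPair K f₂ g := by
  unfold mulPair
  rw [Finsupp.sum_add_index] <;> simp [add_mul, add_smul, Finsupp.sum_add]

theorem mulPair_sum_left {ι : Type*} (s : Finset ι) (F : ι → (List ℕ+ × List ℕ+) →₀ K)
    (g : (List ℕ+ × List ℕ+) →₀ K) :
    mulPair K (∑ i ∈ s, F i) g = ∑ i ∈ s, mulPair K (F i) g :=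
  map_sum (AddMonoidHom.mk' (mulPair K · g) fun f₁ f₂ => mulPair_add_left f₁ f₂ g) F s

theorem mulPair_single_one_left (l₁ l₂ : List ℕ+) (g : (List ℕ+ × List ℕ+) →₀ K) :
    mulPair K (Finsupp.single (l₁, l₂) 1) g =
      Finsupp.mapDomain (fun q => (l₁ ++ q.1, l₂ ++ q.2)) g := by
  rw [mulPair, Finsupp.sum_single_index (by simp)]
  simp [Finsupp.mapDomain]

theorem deltaWord_cons_apply (n : ℕ+) (w : List ℕ+) (x : List ℕ+ × List ℕ+) :
    deltaWord K (n :: w) x =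
      (if [n] <+: x.1 then deltaWord K w (x.1.tail, x.2) else 0) +
      (if [n] <+: x.2 then deltaWord K w (x.1, x.2.tail) else 0) +
      ∑ p ∈ Finset.Iio n,
        if [p] <+: x.1 ∧ [n - p] <+: x.2 then deltaWord K w (x.1.tail, x.2.tail) else 0 := by
  simp only [deltaWord, deltaLetter, mulPair_add_left, mulPair_sum_left, mulPair_single_one_left,
    Finsupp.add_apply, Finsupp.finsetSum_apply, Finsupp.mapDomain_append_pair_apply]
  simp

theorem deltaWord_apply_nil_left (w b : List ℕ+) :
    deltaWord K w ([], b) = if b = w then 1 else 0 := by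
  induction w generalizing b with
  | nil => simp [deltaWord, Finsupp.single_apply, eq_comm]
  | cons n w ih => cases b <;> simp [deltaWord_cons_apply, ih, eq_comm, ite_and]

theorem deltaWord_apply_nil_right (w a : List ℕ+) :
    deltaWord K w (a, []) = if a = w then 1 else 0 := by
  induction w generalizing a with
  | nil => simp [deltaWord, Finsupp.single_apply, eq_comm]
  | cons n w ih => cases a <;> simp [deltaWord_cons_apply, ih, eq_comm, ite_and]

theorem PNat.lt_and_sub_eq_iff_add_eq {i j n : ℕ+} : i < n ∧ n - i = j ↔ i + j = n := by
  constructor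
  · rintro ⟨h, rfl⟩
    rw [add_comm, PNat.sub_add_of_lt h]
  · rintro rfl
    exact ⟨PNat.lt_add_right i j, by rw [add_comm, PNat.add_sub]⟩

theorem deltaWord_cons_apply_cons_cons (n i j : ℕ+) (w u v : List ℕ+) :
    deltaWord K (n :: w) (i :: u, j :: v) =
      (if i = n then deltaWord K w (u, j :: v) else 0) +
      (if j = n then deltaWord K w (i :: u, v) else 0) +
      (if i + j = n then deltaWord K w (u, v) else 0) := by
  have hsum : (∑ p ∈ Finset.Iio n,
      if p = i ∧ n - p = j then deltaWord K w (u, v) else 0) =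
        if i + j = n then deltaWord K w (u, v) else 0 := by
    simp_rw [ite_and, Finset.sum_ite_eq', Finset.mem_Iio, ← ite_and,
      PNat.lt_and_sub_eq_iff_add_eq]
  simp only [deltaWord_cons_apply, List.cons_prefix_cons, List.nil_prefix, and_true,
    List.tail_cons, hsum, @eq_comm _ n]

theorem stuffleWord_cons_cons_apply_nil (i j : ℕ+) (u v : List ℕ+) :
    stuffleWord K (i :: u) (j :: v) [] = 0 := by
  simp [stuffleWord.eq_3, Finsupp.mapDomain_cons_apply_nil]

theorem stuffleWord_cons_cons_apply_cons (i j n : ℕ+) (u v w : List ℕ+) :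
    stuffleWord K (i :: u) (j :: v) (n :: w) =
      (if i = n then stuffleWord K u (j :: v) w else 0) +
      (if j = n then stuffleWord K (i :: u) v w else 0) +
      (if i + j = n then stuffleWord K u v w else 0) := by
  simp only [stuffleWord.eq_3, Finsupp.add_apply, Finsupp.mapDomain_cons_apply_cons]

end Coproduct

theorem stuffle_dual_coproduct_general (K : Type*) [Field K]
    (u v w : List ℕ+) :
    (stuffleWord K u v) w = (deltaWord K w) (u, v) := by
  induction u, v using stuffleWord.induct generalizing w with
  | case1 v => simp [stuffleWord.eq_1, deltaWord_apply_nil_left, Finsupp.single_apply]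
  | case2 u hu => simp [stuffleWord.eq_2 K u hu, deltaWord_apply_nil_right, Finsupp.single_apply]
  | case3 i u j v ih₁ ih₂ ih₃ =>
    cases w with
    | nil => simp [stuffleWord_cons_cons_apply_nil, deltaWord]
    | cons n w =>
      rw [stuffleWord_cons_cons_apply_cons, deltaWord_cons_apply_cons_cons, ih₁, ih₂, ih₃]

/-- `Δ_⊛` is dual to the stuffle product: `⟨u ⊛ v, w⟩ = ⟨u ⊗ v, Δ_⊛(w)⟩`
for all words `u, v, w`, with respect to the pairing making words orthonormal. -/
theorem stuffle_dual_coproduct (K : Type*) [Field K] [CharZero K]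
    (u v w : List ℕ+) :
    (stuffleWord K u v) w = (deltaWord K w) (u, v) :=
  stuffle_dual_coproduct_general K u v w
end

section
/- Every nonempty word w over a totally ordered alphabet X admits a unique factorization w = l_1 l_2 ... l_k as a nonincreasing product of Lyndon words (l_1 ≥ l_2 ≥ ... ≥ l_k in the lexicographic order). -/
/-- A Lyndon word over a totally ordered alphabet: a nonempty word that is
strictly smaller (lexicographically) than each of its proper nonempty suffixes. -/
def IsLyndon {X : Type*} [LinearOrder X] (w : List X) : Prop :=
  w ≠ [] ∧ ∀ u v : List X, u ≠ [] → v ≠ [] → w = u ++ v → w < v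

/-!
Existence: every letter is a Lyndon word, and the concatenation `u ++ v` of Lyndon words with
`u < v` is again Lyndon. Prepending a Lyndon word to a nonincreasing Lyndon factorization and
merging it with the head as long as it is smaller than the head therefore yields a nonincreasing
Lyndon factorization again.

Uniqueness: the first factor `l` of a nonincreasing Lyndon factorization `l :: ls` is the longest
Lyndon prefix of the word. A longer Lyndon prefix `p` would end in a nonempty prefix `u` of some
later factor `g`, and then `p < u ≤ g ≤ l ≤ p`.
-/

namespace List

theorem Lex.append_of_not_prefix {α : Type*} {r : α → α → Prop} {u v : List α}
    (h : Lex r u v) (hp : ¬ u <+: v) (x y : List α) : Lex r (u ++ x) (v ++ y) := by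
  induction h with
  | nil => exact absurd nil_prefix hp
  | cons _ ih => exact Lex.cons (ih fun hpre => hp (cons_prefix_cons.mpr ⟨rfl, hpre⟩))
  | rel h => exact Lex.rel h

theorem exists_mem_prefix_suffix_of_prefix_flatten {α : Type*} :
    ∀ {fs : List (List α)} {p : List α}, p ≠ [] → p <+: fs.flatten →
      ∃ g ∈ fs, ∃ u ≠ [], u <+: g ∧ u <:+ p
  | [], p, hp, hpre => absurd (prefix_nil.mp hpre) hp
  | g :: fs, p, hp, hpre => by
    rw [flatten_cons] at hpre
    rcases prefix_or_prefix_of_prefix hpre (prefix_append g fs.flatten) with hpg | ⟨p', rfl⟩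
    · exact ⟨g, mem_cons_self, p, hp, hpg, suffix_refl p⟩
    rcases eq_or_ne p' [] with rfl | hp'
    · exact ⟨g, mem_cons_self, g ++ [], hp, by simp, suffix_refl _⟩
    obtain ⟨g', hg', u, hu, hug', hup'⟩ :=
      exists_mem_prefix_suffix_of_prefix_flatten hp' ((prefix_append_right_inj g).mp hpre)
    exact ⟨g', mem_cons_of_mem g hg', u, hu, hug', hup'.trans (suffix_append g p')⟩

end List

namespace IsLyndon

variable {X : Type*} [LinearOrder X] {u v : List X}

theorem singleton (a : X) : IsLyndon [a] := by
  refine ⟨List.cons_ne_nil a [], fun s t hs ht hst => ?_⟩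
  rcases List.append_eq_singleton_iff.mp hst.symm with ⟨rfl, _⟩ | ⟨_, rfl⟩
  · exact absurd rfl hs
  · exact absurd rfl ht

theorem append_lt_right (hu : u ≠ []) (hv : IsLyndon v) (huv : u < v) : u ++ v < v := by
  by_cases hp : u <+: v
  · obtain ⟨t, rfl⟩ := hp
    have ht : t ≠ [] := by
      rintro rfl
      simp at huv
    exact List.append_left_lt (hv.2 u t hu ht rfl)
  · simpa using huv.append_of_not_prefix hp v []

theorem append (hu : IsLyndon u) (hv : IsLyndon v) (huv : u < v) : IsLyndon (u ++ v) := by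
  have hlt := append_lt_right hu.1 hv huv
  refine ⟨by simp [hu.1], fun s t hs ht hst => ?_⟩
  rcases List.append_eq_append_iff.mp hst with ⟨a, rfl, hva⟩ | ⟨c, huc, rfl⟩
  · rcases eq_or_ne a [] with rfl | ha
    · obtain rfl : v = t := by simpa using hva
      exact hlt
    · exact hlt.trans (hv.2 a t ha ht hva)
  · rcases eq_or_ne c [] with rfl | hc
    · exact hlt
    have hnp : ¬ u <+: c := fun hpre => by
      have hlen := congrArg List.length huc
      have := hpre.length_le
      have := List.length_pos_iff.mpr hs
      simp only [List.length_append] at hlen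
      omega
    exact (hu.2 s c hs hc huc).append_of_not_prefix hnp v v

end IsLyndon

section Factorization

variable {X : Type*} [LinearOrder X]

def IsDecreasingLyndon (ls : List (List X)) : Prop :=
  (∀ l ∈ ls, IsLyndon l) ∧ ls.IsChain (· ≥ ·)

namespace IsDecreasingLyndon

theorem nil : IsDecreasingLyndon ([] : List (List X)) :=
  ⟨fun _ h => absurd h List.not_mem_nil, List.isChain_nil⟩

theorem of_cons {l : List X} {ls : List (List X)} (h : IsDecreasingLyndon (l :: ls)) :
    IsDecreasingLyndon ls :=
  ⟨fun g hg => h.1 g (List.mem_cons_of_mem l hg), h.2.tail⟩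

theorem le_head {l : List X} {ls : List (List X)} (h : IsDecreasingLyndon (l :: ls)) :
    ∀ g ∈ ls, g ≤ l :=
  (List.pairwise_cons.mp (List.isChain_iff_pairwise.mp h.2)).1

theorem flatten_ne_nil {l : List X} {ls : List (List X)} (h : IsDecreasingLyndon (l :: ls)) :
    (l :: ls).flatten ≠ [] := by
  simp [(h.1 l List.mem_cons_self).1]

theorem exists_flatten_eq_append {l : List X} (hl : IsLyndon l) :
    ∀ {ls : List (List X)}, IsDecreasingLyndon ls →
      ∃ ms, IsDecreasingLyndon ms ∧ ms.flatten = l ++ ls.flatten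
  | [], _ => ⟨[l], ⟨by simpa using hl, List.isChain_singleton l⟩, by simp⟩
  | m :: ms, h => by
    by_cases hml : m ≤ l
    · exact ⟨l :: m :: ms, ⟨by simpa [hl] using h.1, h.2.cons_cons hml⟩, rfl⟩
    · obtain ⟨ns, hns, hflat⟩ :=
        exists_flatten_eq_append (hl.append (h.1 m List.mem_cons_self) (not_le.mp hml)) h.of_cons
      exact ⟨ns, hns, by simp [hflat]⟩

theorem exists_flatten_eq : ∀ w : List X, ∃ ls, IsDecreasingLyndon ls ∧ ls.flatten = w
  | [] => ⟨[], nil, rfl⟩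
  | a :: w => by
    obtain ⟨ls, hls, rfl⟩ := exists_flatten_eq w
    exact exists_flatten_eq_append (IsLyndon.singleton a) hls

theorem length_le_head_of_prefix {l p : List X} {ls : List (List X)}
    (h : IsDecreasingLyndon (l :: ls)) (hp : IsLyndon p) (hpre : p <+: (l :: ls).flatten) :
    p.length ≤ l.length := by
  by_contra! hlen
  rw [List.flatten_cons] at hpre
  obtain ⟨p', rfl⟩ : l <+: p :=
    List.prefix_of_prefix_length_le (List.prefix_append l _) hpre hlen.le
  have hp' : p' ≠ [] := by
    rintro rfl
    simp at hlen
  obtain ⟨g, hg, u, hu, hug, s, rfl⟩ :=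
    List.exists_mem_prefix_suffix_of_prefix_flatten hp' ((List.prefix_append_right_inj l).mp hpre)
  have hl : l ≠ [] := (h.1 l List.mem_cons_self).1
  have hpu : l ++ (s ++ u) < u := hp.2 (l ++ s) u (by simp [hl]) hu (by simp)
  have hup : u ≤ l ++ (s ++ u) :=
    (not_lt.mp hug.le).trans ((h.le_head g hg).trans (not_lt.mp (List.prefix_append l _).le))
  exact lt_irrefl _ (hpu.trans_le hup)

theorem eq_of_flatten_eq :
    ∀ {ls ms : List (List X)}, IsDecreasingLyndon ls → IsDecreasingLyndon ms →
      ls.flatten = ms.flatten → ls = ms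
  | [], [], _, _, _ => rfl
  | [], _ :: _, _, hm, hflat => absurd hflat.symm hm.flatten_ne_nil
  | _ :: _, [], hl, _, hflat => absurd hflat hl.flatten_ne_nil
  | l :: ls, m :: ms, hl, hm, hflat => by
    have hl_pre : l <+: (m :: ms).flatten := hflat ▸ List.prefix_append l ls.flatten
    have hm_pre : m <+: (l :: ls).flatten := hflat ▸ List.prefix_append m ms.flatten
    have hlm : l.length ≤ m.length :=
      hm.length_le_head_of_prefix (hl.1 l List.mem_cons_self) hl_pre
    have hml : m.length ≤ l.length :=
      hl.length_le_head_of_prefix (hm.1 m List.mem_cons_self) hm_pre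
    obtain rfl : l = m :=
      List.prefix_of_prefix_length_le hl_pre (List.prefix_append m _)
        hlm |>.eq_of_length (le_antisymm hlm hml)
    rw [eq_of_flatten_eq hl.of_cons hm.of_cons (by simpa using hflat)]

end IsDecreasingLyndon

end Factorization

theorem unique_decreasing_lyndon_factorization_general {X : Type*} [LinearOrder X]
    (w : List X) :
    ∃! ls : List (List X),
      (∀ l ∈ ls, IsLyndon l) ∧
      List.Chain' (fun a b => b ≤ a) ls ∧
      ls.flatten = w := by
  obtain ⟨ls, hls, hflat⟩ := IsDecreasingLyndon.exists_flatten_eq w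
  refine ⟨ls, ⟨hls.1, hls.2, hflat⟩, ?_⟩
  rintro ms ⟨hlyn, hchain, rfl⟩
  exact IsDecreasingLyndon.eq_of_flatten_eq ⟨hlyn, hchain⟩ hls hflat.symm

/-- Every nonempty word admits a unique factorization as a nonincreasing
product of Lyndon words. -/
theorem unique_decreasing_lyndon_factorization {X : Type*} [LinearOrder X]
    (w : List X) (hw : w ≠ []) :
    ∃! ls : List (List X),
      (∀ l ∈ ls, IsLyndon l) ∧
      List.Chain' (fun a b => b ≤ a) ls ∧
      ls.flatten = w :=
  unique_decreasing_lyndon_factorization_general w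
end

section
/- Let g be a Lie algebra over a field k of characteristic 0 with ordered basis B = (b_i)_{i∈I}, let (B^α)_{α∈ℕ^{(I)}} be the associated PBW basis of the universal enveloping algebra U(g) (decreasing-ordered monomials in the b_i), and let (S_α) be the dual family of linear forms with ⟨S_α, B^β⟩ = δ_{αβ}. Then under the convolution product * on U(g)^* (dual to the standard coproduct Δ(x) = x⊗1 + 1⊗x for x ∈ g), one has S_α * S_β = ((α+β)!/(α!β!)) S_{α+β} for all α, β ∈ ℕ^{(I)}. -/
open TensorProduct

/-- The PBW monomial `B^α`: the product `b_{i₁}^{α(i₁)} ⋯ b_{i_k}^{α(i_k)}`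
taken in decreasing order of indices, inside the universal enveloping algebra. -/
noncomputable def pbwMonomial {k : Type*} [Field k] {I : Type*} [LinearOrder I]
    {g : Type*} [LieRing g] [LieAlgebra k g] (B : Module.Basis I k g) (α : I →₀ ℕ) :
    UniversalEnvelopingAlgebra k g :=
  (((α.support.sort (· ≤ ·)).reverse).map
    (fun i => (UniversalEnvelopingAlgebra.ι k (B i) :
      UniversalEnvelopingAlgebra k g) ^ (α i))).prod

/-- Convolution of two linear forms on `U(g)`, dual to the coproduct `Δ`. -/
noncomputable def convForm {k : Type*} [Field k] {g : Type*} [LieRing g]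
    [LieAlgebra k g]
    (Δ : UniversalEnvelopingAlgebra k g →ₐ[k]
      (UniversalEnvelopingAlgebra k g ⊗[k] UniversalEnvelopingAlgebra k g))
    (f h : UniversalEnvelopingAlgebra k g →ₗ[k] k) :
    UniversalEnvelopingAlgebra k g →ₗ[k] k :=
  (TensorProduct.lid k k).toLinearMap ∘ₗ TensorProduct.map f h ∘ₗ Δ.toLinearMap

/-- `α! = Π_i α(i)!` for a multiindex `α`. -/
def mfact {I : Type*} (α : I →₀ ℕ) : ℕ := α.prod fun _ n => n.factorial

/-!
Each `b_i` is primitive, so `Δ(b_i^n) = Σ_{a+b=n} C(n,a) b_i^a ⊗ b_i^b`. Since `Δ` is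
multiplicative and the factors of `B^γ` keep their decreasing order on both sides of the tensor,
`Δ(B^γ) = Σ_{δ+ε=γ} C(γ,δ) B^δ ⊗ B^ε` with `C(γ,δ) = Π_i C(γ_i, δ_i)`. Pairing with `S_α ⊗ S_β`
therefore picks out the single term `(δ, ε) = (α, β)`, whose coefficient is
`C(α+β, α) = (α+β)!/(α!β!)`.
-/

section ListMonomial

variable {A I : Type*} [Monoid A] (x : I → A)

/-- `pbwMonomial` is the case of the decreasingly sorted support; running over an arbitrary list
lets every `B^δ` with `δ ≤ γ` be read along the support of `γ`. -/
def listMonomial (L : List I) (γ : I →₀ ℕ) : A := (L.map fun i => x i ^ γ i).prod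

lemma listMonomial_cons (i : I) (L : List I) (γ : I →₀ ℕ) :
    listMonomial x (i :: L) γ = x i ^ γ i * listMonomial x L γ := by
  simp [listMonomial]

lemma listMonomial_congr {L : List I} {γ δ : I →₀ ℕ} (h : ∀ j ∈ L, γ j = δ j) :
    listMonomial x L γ = listMonomial x L δ := by
  simp only [listMonomial]
  rw [List.map_congr_left fun j hj => by rw [h j hj]]

lemma listMonomial_cons_single_add {i : I} {L : List I} (hi : i ∉ L) (n : ℕ)
    {γ : I →₀ ℕ} (hγ : γ i = 0) :
    listMonomial x (i :: L) (Finsupp.single i n + γ) = x i ^ n * listMonomial x L γ := by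
  rw [listMonomial_cons, listMonomial_congr x (δ := γ) fun j hj => ?_]
  · simp [hγ]
  · simp [Finsupp.single_eq_of_ne (ne_of_mem_of_not_mem hj hi)]

lemma listMonomial_filter_mem_support [DecidableEq I] (L : List I) (γ : I →₀ ℕ) :
    listMonomial x (L.filter (· ∈ γ.support)) γ = listMonomial x L γ := by
  induction L with
  | nil => rfl
  | cons i L ih =>
    rw [List.filter_cons]
    split_ifs with hi
    · rw [listMonomial_cons, listMonomial_cons, ih]
    · rw [listMonomial_cons, ih, Finsupp.notMem_support_iff.mp (by simpa using hi), pow_zero,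
        one_mul]

end ListMonomial

lemma Finset.filter_sort_of_subset {I : Type*} [LinearOrder I]
    {s t : Finset I} (h : t ⊆ s) :
    (s.sort (· ≤ ·)).filter (· ∈ t) = t.sort (· ≤ ·) :=
  (s.sortedLT_sort.pairwise.filter _).eq_of_mem_iff t.sortedLT_sort.pairwise fun j => by
    simpa using fun hj => h hj

lemma pbwMonomial_eq_listMonomial {k : Type*} [Field k] {I : Type*} [LinearOrder I]
    {g : Type*} [LieRing g] [LieAlgebra k g] (B : Module.Basis I k g) {δ : I →₀ ℕ}
    {s : Finset I} (h : δ.support ⊆ s) :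
    pbwMonomial B δ = listMonomial (fun i => UniversalEnvelopingAlgebra.ι k (B i))
      (s.sort (· ≤ ·)).reverse δ := by
  rw [← listMonomial_filter_mem_support, List.filter_reverse, Finset.filter_sort_of_subset h]
  rfl

open Finset.HasAntidiagonal

section Multiindex

variable {I : Type*}

noncomputable def mchoose (δ ε : I →₀ ℕ) : ℕ := (δ + ε).prod fun i n => n.choose (δ i)

lemma mchoose_eq_prod {δ ε : I →₀ ℕ} {s : Finset I} (h : (δ + ε).support ⊆ s) :
    mchoose δ ε = ∏ i ∈ s, (δ i + ε i).choose (δ i) := by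
  refine Finset.prod_subset h fun i _ hi => ?_
  obtain ⟨hδ, hε⟩ := add_eq_zero.mp (Finsupp.notMem_support_iff.mp hi)
  simp [hδ, hε]

lemma mfact_eq_prod {δ : I →₀ ℕ} {s : Finset I} (h : δ.support ⊆ s) :
    mfact δ = ∏ i ∈ s, (δ i).factorial :=
  Finsupp.prod_of_support_subset δ h _ fun _ _ => Nat.factorial_zero

lemma mchoose_mul_mfact_mul_mfact (δ ε : I →₀ ℕ) :
    mchoose δ ε * (mfact δ * mfact ε) = mfact (δ + ε) := by
  have hδ : δ.support ⊆ (δ + ε).support := Finsupp.support_mono le_self_add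
  have hε : ε.support ⊆ (δ + ε).support := Finsupp.support_mono le_add_self
  rw [mchoose_eq_prod subset_rfl, mfact_eq_prod hδ, mfact_eq_prod hε, mfact_eq_prod subset_rfl,
    ← Finset.prod_mul_distrib, ← Finset.prod_mul_distrib]
  exact Finset.prod_congr rfl fun i _ => by
    rw [← mul_assoc, Finsupp.add_apply, Nat.choose_symm_add,
      Nat.add_choose_mul_factorial_mul_factorial]

lemma mchoose_single_add_single_add [DecidableEq I] (i : I) (a b : ℕ) {δ ε : I →₀ ℕ}
    (hδ : δ i = 0) (hε : ε i = 0) :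
    mchoose (Finsupp.single i a + δ) (Finsupp.single i b + ε) =
      (a + b).choose a * mchoose δ ε := by
  have hi : i ∉ (δ + ε).support := by simp [hδ, hε]
  rw [mchoose_eq_prod (s := insert i (δ + ε).support), Finset.prod_insert hi,
    mchoose_eq_prod subset_rfl]
  · congr 1
    · simp [hδ, hε]
    · refine Finset.prod_congr rfl fun j hj => ?_
      simp [Finsupp.single_eq_of_ne (ne_of_mem_of_not_mem hj hi)]
  · intro j hj
    by_cases hji : j = i
    · exact hji ▸ Finset.mem_insert_self _ _
    · exact Finset.mem_insert_of_mem (by simpa [Finsupp.single_eq_of_ne hji] using hj)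

lemma Finsupp.apply_eq_zero_of_mem_antidiagonal [DecidableEq I] {γ : I →₀ ℕ} {i : I}
    (hγ : γ i = 0) {p : (I →₀ ℕ) × (I →₀ ℕ)} (hp : p ∈ antidiagonal γ) : p.1 i = 0 ∧ p.2 i = 0 :=
  add_eq_zero.mp (by rw [← Finsupp.add_apply, mem_antidiagonal.mp hp, hγ])

lemma Finsupp.sum_antidiagonal_single_add [DecidableEq I] {M : Type*} [AddCommMonoid M]
    (i : I) (n : ℕ) {γ : I →₀ ℕ} (hγ : γ i = 0) (F : (I →₀ ℕ) × (I →₀ ℕ) → M) :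
    ∑ p ∈ antidiagonal (single i n + γ), F p =
      ∑ q ∈ antidiagonal n, ∑ p ∈ antidiagonal γ,
        F (single i q.1 + p.1, single i q.2 + p.2) := by
  rw [← Finset.sum_product']
  have erase_eq {δ : I →₀ ℕ} (hδ : δ i = 0) (m : ℕ) :
      (single i m + δ).erase i = δ := by
    rw [erase_add, erase_single, zero_add, erase_of_notMem_support (by simpa using hδ)]
  refine Finset.sum_nbij'
    (fun p => ((p.1 i, p.2 i), (p.1.erase i, p.2.erase i)))
    (fun r => (single i r.1.1 + r.2.1, single i r.1.2 + r.2.2)) ?_ ?_ ?_ ?_ ?_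
  · rintro ⟨p₁, p₂⟩ hp
    rw [mem_antidiagonal] at hp
    simp only [Finset.mem_product, mem_antidiagonal]
    rw [← add_apply, ← erase_add, hp, erase_eq hγ]
    simp [hγ]
  · rintro ⟨⟨a, b⟩, p⟩ hr
    simp only [Finset.mem_product, mem_antidiagonal] at hr ⊢
    rw [add_add_add_comm, ← single_add, hr.1, hr.2]
  · rintro ⟨p₁, p₂⟩ -
    simp only [single_add_erase]
  · rintro ⟨⟨a, b⟩, p⟩ hr
    simp only [Finset.mem_product] at hr
    obtain ⟨h₁, h₂⟩ := apply_eq_zero_of_mem_antidiagonal hγ hr.2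
    simp [h₁, h₂, erase_eq]
  · rintro ⟨p₁, p₂⟩ -
    simp only [single_add_erase]

end Multiindex

section Coproduct

variable {R A : Type*} [CommSemiring R] [Semiring A] [Algebra R A] (Δ : A →ₐ[R] A ⊗[R] A)

lemma map_pow_of_primitive {y : A} (hy : Δ y = y ⊗ₜ[R] 1 + 1 ⊗ₜ[R] y) (n : ℕ) :
    Δ (y ^ n) =
      ∑ q ∈ antidiagonal n, n.choose q.1 • ((y ^ q.1) ⊗ₜ[R] (y ^ q.2)) := by
  have hcomm : Commute (y ⊗ₜ[R] (1 : A)) (1 ⊗ₜ[R] y) := by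
    simp [Commute, SemiconjBy, Algebra.TensorProduct.tmul_mul_tmul]
  rw [map_pow, hy, hcomm.add_pow']
  simp only [Algebra.TensorProduct.tmul_pow, Algebra.TensorProduct.tmul_mul_tmul, one_pow,
    mul_one, one_mul]

lemma map_listMonomial_of_primitive {I : Type*} [DecidableEq I] (x : I → A)
    (hx : ∀ i, Δ (x i) = x i ⊗ₜ[R] 1 + 1 ⊗ₜ[R] x i) {L : List I} (hL : L.Nodup) {γ : I →₀ ℕ}
    (hγ : ∀ j ∉ L, γ j = 0) :
    Δ (listMonomial x L γ) = ∑ p ∈ antidiagonal γ,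
      mchoose p.1 p.2 • (listMonomial x L p.1 ⊗ₜ[R] listMonomial x L p.2) := by
  induction L generalizing γ with
  | nil =>
    obtain rfl : γ = 0 := Finsupp.ext fun j => hγ j List.not_mem_nil
    simp [mchoose, listMonomial, Algebra.TensorProduct.one_def]
  | cons i L ih =>
    obtain ⟨hi, hL⟩ := List.nodup_cons.mp hL
    have hγ' : ∀ j ∉ L, γ.erase i j = 0 := fun j hj => by
      by_cases hji : j = i
      · simp [hji]
      · simpa [Finsupp.erase_ne hji] using hγ j (by simp [hji, hj])
    rw [← Finsupp.single_add_erase i γ,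
      Finsupp.sum_antidiagonal_single_add _ _ Finsupp.erase_same,
      listMonomial_cons_single_add x hi _ Finsupp.erase_same, map_mul,
      map_pow_of_primitive Δ (hx i), ih hL hγ', Finset.sum_mul_sum]
    refine Finset.sum_congr rfl fun q hq => Finset.sum_congr rfl fun p hp => ?_
    obtain ⟨hp₁, hp₂⟩ := Finsupp.apply_eq_zero_of_mem_antidiagonal Finsupp.erase_same hp
    rw [mchoose_single_add_single_add i _ _ hp₁ hp₂, listMonomial_cons_single_add x hi _ hp₁,
      listMonomial_cons_single_add x hi _ hp₂, mem_antidiagonal.mp hq, smul_mul_smul_comm,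
      Algebra.TensorProduct.tmul_mul_tmul, mul_smul]

end Coproduct

section PBW

variable {k : Type*} [Field k] {I : Type*} [LinearOrder I] {g : Type*} [LieRing g]
  [LieAlgebra k g] (B : Module.Basis I k g)
  (Δ : UniversalEnvelopingAlgebra k g →ₐ[k]
    (UniversalEnvelopingAlgebra k g ⊗[k] UniversalEnvelopingAlgebra k g))

lemma map_pbwMonomial_of_primitive
    (hΔ : ∀ x : g, Δ (UniversalEnvelopingAlgebra.ι k x) =
      (UniversalEnvelopingAlgebra.ι k x : UniversalEnvelopingAlgebra k g) ⊗ₜ[k] 1 +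
        1 ⊗ₜ[k] (UniversalEnvelopingAlgebra.ι k x : UniversalEnvelopingAlgebra k g))
    (γ : I →₀ ℕ) :
    Δ (pbwMonomial B γ) = ∑ p ∈ antidiagonal γ,
      mchoose p.1 p.2 • (pbwMonomial B p.1 ⊗ₜ[k] pbwMonomial B p.2) := by
  rw [pbwMonomial_eq_listMonomial B subset_rfl,
    map_listMonomial_of_primitive Δ _ (fun i => hΔ (B i))
      (List.nodup_reverse.mpr (Finset.sort_nodup _ _))
      fun j hj => Finsupp.notMem_support_iff.mp (by simpa using hj)]
  refine Finset.sum_congr rfl fun p hp => ?_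
  rw [pbwMonomial_eq_listMonomial B (Finsupp.support_mono (antidiagonal.fst_le hp)),
    pbwMonomial_eq_listMonomial B (Finsupp.support_mono (antidiagonal.snd_le hp))]

lemma convForm_apply_pbwMonomial
    (hΔ : ∀ x : g, Δ (UniversalEnvelopingAlgebra.ι k x) =
      (UniversalEnvelopingAlgebra.ι k x : UniversalEnvelopingAlgebra k g) ⊗ₜ[k] 1 +
        1 ⊗ₜ[k] (UniversalEnvelopingAlgebra.ι k x : UniversalEnvelopingAlgebra k g))
    (f h : UniversalEnvelopingAlgebra k g →ₗ[k] k) (γ : I →₀ ℕ) :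
    convForm Δ f h (pbwMonomial B γ) = ∑ p ∈ antidiagonal γ,
      mchoose p.1 p.2 • (f (pbwMonomial B p.1) * h (pbwMonomial B p.2)) := by
  simp only [convForm, LinearMap.comp_apply, AlgHom.toLinearMap_apply,
    map_pbwMonomial_of_primitive B Δ hΔ, map_sum, map_nsmul, TensorProduct.map_tmul,
    LinearEquiv.coe_coe, TensorProduct.lid_tmul, smul_eq_mul]

lemma convForm_coord_coord_apply
    (C : Module.Basis (I →₀ ℕ) k (UniversalEnvelopingAlgebra k g))
    (hC : ∀ α, C α = pbwMonomial B α)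
    (hΔ : ∀ x : g, Δ (UniversalEnvelopingAlgebra.ι k x) =
      (UniversalEnvelopingAlgebra.ι k x : UniversalEnvelopingAlgebra k g) ⊗ₜ[k] 1 +
        1 ⊗ₜ[k] (UniversalEnvelopingAlgebra.ι k x : UniversalEnvelopingAlgebra k g))
    (α β γ : I →₀ ℕ) :
    convForm Δ (C.coord α) (C.coord β) (C γ) =
      if α + β = γ then (mchoose α β : k) else 0 := by
  have hcoord (μ ν : I →₀ ℕ) : C.coord μ (pbwMonomial B ν) = if ν = μ then 1 else 0 := by
    rw [← hC, C.coord_apply, C.repr_self, Finsupp.single_apply]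
  have hpair (p : (I →₀ ℕ) × (I →₀ ℕ)) : (p.1 = α ∧ p.2 = β) ↔ p = (α, β) :=
    (Prod.ext_iff (x := p) (y := (α, β))).symm
  simp only [hC, convForm_apply_pbwMonomial B Δ hΔ, hcoord, ite_zero_mul_ite_zero, hpair,
    smul_ite, smul_zero, Finset.sum_ite_eq', mem_antidiagonal, mul_one, nsmul_eq_mul]

end PBW

lemma mchoose_eq_mfact_div {k I : Type*} [Field k] [CharZero k] (α β : I →₀ ℕ) :
    (mchoose α β : k) = mfact (α + β) / (mfact α * mfact β) := by
  have hpos (δ : I →₀ ℕ) : (mfact δ : k) ≠ 0 :=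
    Nat.cast_ne_zero.mpr (Finset.prod_pos fun _ _ => Nat.factorial_pos _).ne'
  rw [eq_div_iff (mul_ne_zero (hpos α) (hpos β)), ← mchoose_mul_mfact_mul_mfact]
  push_cast
  ring

/-- For a Lie algebra `g` with ordered basis `B`, PBW basis `(B^α)` of `U(g)` and
dual family `S_α = C.coord α`, convolution (dual to `Δ(x) = x⊗1 + 1⊗x` for `x ∈ g`)
satisfies `S_α * S_β = ((α+β)!/(α!β!)) S_{α+β}`. -/
theorem dual_pbw_convolution {k : Type*} [Field k] [CharZero k]
    {I : Type*} [LinearOrder I] {g : Type*} [LieRing g] [LieAlgebra k g]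
    (B : Module.Basis I k g)
    (C : Module.Basis (I →₀ ℕ) k (UniversalEnvelopingAlgebra k g))
    (hC : ∀ α, C α = pbwMonomial B α)
    (Δ : UniversalEnvelopingAlgebra k g →ₐ[k]
      (UniversalEnvelopingAlgebra k g ⊗[k] UniversalEnvelopingAlgebra k g))
    (hΔ : ∀ x : g, Δ (UniversalEnvelopingAlgebra.ι k x) =
      (UniversalEnvelopingAlgebra.ι k x : UniversalEnvelopingAlgebra k g) ⊗ₜ[k] 1 +
        1 ⊗ₜ[k] (UniversalEnvelopingAlgebra.ι k x : UniversalEnvelopingAlgebra k g))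
    (α β : I →₀ ℕ) :
    convForm Δ (C.coord α) (C.coord β) =
      ((mfact (α + β) : k) / ((mfact α : k) * (mfact β : k))) • C.coord (α + β) := by
  refine C.ext fun γ => ?_
  rw [convForm_coord_coord_apply B Δ C hC hΔ, LinearMap.smul_apply, C.coord_apply, C.repr_self,
    Finsupp.single_apply, smul_eq_mul, mul_ite, mul_one, mul_zero, mchoose_eq_mfact_div]
  exact if_congr eq_comm rfl rfl
end

section
/- In the commutative polynomial bialgebra, the commutative specialization of Schützenberger's factorization holds: Π_{x∈X} exp(x ⊗ x) = Σ_{α∈ℕ^{(X)}} X^α ⊗ X^α, where the left tensor factor is multiplied with the divided-power (shuffle) product satisfying x^m ⧢ x^n = C(m+n,m) x^{m+n}, and the right tensor factor with the ordinary commutative product. -/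
/-- The completed tensor product of the divided-power (shuffle) algebra on the
variables `X` with the polynomial algebra `k[X]`, realized as double series
indexed by pairs of multiindices.  The product uses the divided-power product
`x^m ⧢ x^n = C(m+n, m) x^{m+n}` on the left factor and the ordinary commutative
product on the right factor. -/
noncomputable def mulC (K : Type*) [Field K] {X : Type*} [DecidableEq X]
    (f g : (X →₀ ℕ) × (X →₀ ℕ) → K) : (X →₀ ℕ) × (X →₀ ℕ) → K :=
  fun p =>
    ∑ q ∈ Finset.HasAntidiagonal.antidiagonal p.1, ∑ r ∈ Finset.HasAntidiagonal.antidiagonal p.2,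
      f (q.1, r.1) * g (q.2, r.2) *
        ∏ x ∈ p.1.support, ((p.1 x).choose (q.1 x) : K)

/-- The unit double series `1 ⊗ 1`. -/
noncomputable def unitC (K : Type*) [Field K] {X : Type*} [DecidableEq X] :
    (X →₀ ℕ) × (X →₀ ℕ) → K :=
  fun p => if p.1 = 0 ∧ p.2 = 0 then 1 else 0

/-- The separated tensor `x ⊗ x` for a variable `x`. -/
noncomputable def xTensorX (K : Type*) [Field K] {X : Type*} [DecidableEq X]
    (x : X) : (X →₀ ℕ) × (X →₀ ℕ) → K :=
  fun p => if p.1 = Finsupp.single x 1 ∧ p.2 = Finsupp.single x 1 then 1 else 0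

/-- Powers in the completed tensor product. -/
noncomputable def powC (K : Type*) [Field K] {X : Type*} [DecidableEq X]
    (t : (X →₀ ℕ) × (X →₀ ℕ) → K) : ℕ → ((X →₀ ℕ) × (X →₀ ℕ) → K)
  | 0 => unitC K
  | n + 1 => mulC K t (powC K t n)

/-- The exponential `exp(t) = Σ_n t^n/n!` in the completed tensor product
(each coefficient is a finite sum, all higher terms vanishing in the relevant
degree). -/
noncomputable def expC (K : Type*) [Field K] {X : Type*} [DecidableEq X]
    (t : (X →₀ ℕ) × (X →₀ ℕ) → K) : (X →₀ ℕ) × (X →₀ ℕ) → K :=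
  fun p => ((List.range (p.1.sum (fun _ n => n) + p.2.sum (fun _ n => n) + 1)).map
    fun n => ((n.factorial : K))⁻¹ * powC K t n p).sum

/-!
Since `(x ⊗ x)^n = n! · x^n ⊗ x^n`, the factor `exp (x ⊗ x)` is the diagonal series
`Σ_m x^m ⊗ x^m` over the single variable `x`. Diagonal series over disjoint sets of variables
multiply to the diagonal series over their union: a monomial splits in exactly one way into a
part in each set of variables, and the divided-power coefficient `∏ C(α y, a y)` of such a
split is `1`. The finite partial products are therefore diagonal series over finite sets of
variables, which agree with the full diagonal series on every coefficient once they contain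
its support.
-/

open Classical in
/-- `Σ_{supp α ⊆ s} X^α ⊗ X^α`. -/
noncomputable def diagC (K : Type*) [Field K] {X : Type*} (s : Set X) :
    (X →₀ ℕ) × (X →₀ ℕ) → K :=
  fun p => if p.1 = p.2 ∧ ↑p.1.support ⊆ s then 1 else 0

open Finset Finset.HasAntidiagonal Finsupp

namespace Finsupp

variable {X M : Type*} [AddZeroClass M] {s t : Set X} [DecidablePred (· ∈ s)]

theorem eq_filter_of_add_eq_of_disjoint {q₁ q₂ α : X →₀ M} (hst : Disjoint s t)
    (hq : q₁ + q₂ = α) (h₁ : ↑q₁.support ⊆ s) (h₂ : ↑q₂.support ⊆ t) :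
    q₁ = α.filter (· ∈ s) ∧ q₂ = α.filter (· ∉ s) := by
  have h₁y : ∀ y ∉ s, q₁ y = 0 := fun y hy => notMem_support_iff.1 fun h => hy (h₁ h)
  have h₂y : ∀ y ∈ s, q₂ y = 0 := fun y hy =>
    notMem_support_iff.1 fun h => hst.notMem_of_mem_left hy (h₂ h)
  subst hq
  constructor <;> ext y <;> by_cases hy : y ∈ s <;> simp [hy, h₁y, h₂y]

end Finsupp

section

variable {K : Type*} [Field K] {X : Type*} [DecidableEq X]

theorem mulC_apply_eq_zero {f g : (X →₀ ℕ) × (X →₀ ℕ) → K} {α β : X →₀ ℕ}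
    (h : ∀ q ∈ antidiagonal α, ∀ r ∈ antidiagonal β, f (q.1, r.1) * g (q.2, r.2) = 0) :
    mulC K f g (α, β) = 0 :=
  sum_eq_zero fun q hq => sum_eq_zero fun r hr => by rw [h q hq r hr, zero_mul]

theorem mulC_apply_eq_single {f g : (X →₀ ℕ) × (X →₀ ℕ) → K} {a b c d : X →₀ ℕ}
    (h : ∀ q ∈ antidiagonal (a + c), ∀ r ∈ antidiagonal (b + d),
      f (q.1, r.1) * g (q.2, r.2) ≠ 0 → q = (a, c) ∧ r = (b, d)) :
    mulC K f g (a + c, b + d) =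
      f (a, b) * g (c, d) * ∏ y ∈ (a + c).support, (((a + c) y).choose (a y) : K) := by
  have hac : (a, c) ∈ antidiagonal (a + c) := mem_antidiagonal.2 rfl
  have hbd : (b, d) ∈ antidiagonal (b + d) := mem_antidiagonal.2 rfl
  rw [mulC, sum_eq_single_of_mem _ hac, sum_eq_single_of_mem _ hbd]
  · intro r hr hne
    by_contra h0
    exact hne (h _ hac r hr (left_ne_zero_of_mul h0)).2
  · intro q hq hne
    refine sum_eq_zero fun r hr => ?_
    by_contra h0
    exact hne (h q hq r hr (left_ne_zero_of_mul h0)).1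

theorem powC_xTensorX_apply (x : X) (n : ℕ) (α β : X →₀ ℕ) :
    powC K (xTensorX K x) n (α, β) =
      if α = single x n ∧ β = single x n then (n.factorial : K) else 0 := by
  induction n generalizing α β with
  | zero => simp [powC, unitC]
  | succ n ih =>
    have hterm : ∀ q r : (X →₀ ℕ) × (X →₀ ℕ),
        xTensorX K x (q.1, r.1) * powC K (xTensorX K x) n (q.2, r.2) ≠ 0 →
          q = (single x 1, single x n) ∧ r = (single x 1, single x n) := by
      intro q r h
      rw [xTensorX, ih] at h
      split_ifs at h with h₁ h₂
      · exact ⟨Prod.ext h₁.1 h₂.1, Prod.ext h₁.2 h₂.2⟩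
      all_goals simp at h
    have hsplit : single x (n + 1) = single x 1 + single x n := by
      rw [← single_add, add_comm]
    rw [powC]
    by_cases hαβ : α = single x (n + 1) ∧ β = single x (n + 1)
    · obtain ⟨rfl, rfl⟩ := hαβ
      rw [if_pos ⟨rfl, rfl⟩, hsplit, mulC_apply_eq_single fun q _ r _ => hterm q r, ← hsplit,
        support_single _ n.succ_ne_zero, prod_singleton, single_eq_same, single_eq_same]
      simp [xTensorX, ih, Nat.factorial_succ]
      ring
    · rw [if_neg hαβ]
      refine mulC_apply_eq_zero fun q hq r hr => ?_
      by_contra h0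
      obtain ⟨rfl, rfl⟩ := hterm q r h0
      exact hαβ ⟨(mem_antidiagonal.1 hq).symm.trans hsplit.symm,
        (mem_antidiagonal.1 hr).symm.trans hsplit.symm⟩

theorem expC_xTensorX [CharZero K] (x : X) : expC K (xTensorX K x) = diagC K {x} := by
  ext ⟨α, β⟩
  change ∑ n ∈ range (α.sum (fun _ n => n) + β.sum (fun _ n => n) + 1),
    (n.factorial : K)⁻¹ * powC K (xTensorX K x) n (α, β) = _
  simp only [powC_xTensorX_apply, diagC]
  by_cases h : α = β ∧ ↑α.support ⊆ ({x} : Set X)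
  · obtain ⟨rfl, hα⟩ := h
    obtain ⟨m, rfl⟩ : ∃ m, α = single x m :=
      ⟨α x, support_subset_singleton.1 (by exact_mod_cast hα)⟩
    rw [if_pos ⟨rfl, hα⟩, sum_eq_single_of_mem m]
    · simp [Nat.factorial_ne_zero]
    · simp only [sum_single_index, mem_range]
      omega
    · intro n _ hn
      simp [(single_injective x).eq_iff, hn.symm]
  · rw [if_neg h]
    refine sum_eq_zero fun n _ => ?_
    rw [if_neg, mul_zero]
    rintro ⟨rfl, rfl⟩
    exact h ⟨rfl, by rw [← Finset.coe_singleton]; exact Finset.coe_subset.2 support_single_subset⟩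

theorem unitC_eq_diagC_empty : unitC K = diagC K (∅ : Set X) := by
  ext ⟨α, β⟩
  simp only [unitC, diagC, Set.subset_empty_iff, coe_eq_empty, support_eq_empty]
  by_cases hα : α = 0 <;> simp [hα, eq_comm]

theorem mulC_diagC_diagC {s t : Set X} (hst : Disjoint s t) :
    mulC K (diagC K s) (diagC K t) = diagC K (s ∪ t) := by
  classical
  ext ⟨α, β⟩
  have hterm : ∀ q r : (X →₀ ℕ) × (X →₀ ℕ), diagC K s (q.1, r.1) * diagC K t (q.2, r.2) ≠ 0 →
      r = q ∧ ↑q.1.support ⊆ s ∧ ↑q.2.support ⊆ t := by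
    intro q r h
    rw [diagC, diagC] at h
    split_ifs at h with h₁ h₂
    · exact ⟨Prod.ext h₁.1.symm h₂.1.symm, h₁.2, h₂.2⟩
    all_goals simp at h
  by_cases h : α = β ∧ ↑α.support ⊆ s ∪ t
  · obtain ⟨rfl, hα⟩ := h
    set a := α.filter (· ∈ s)
    set c := α.filter (· ∉ s)
    have hac : a + c = α := filter_add_filter_not α (· ∈ s)
    have ha : diagC K s (a, a) = 1 := by
      rw [diagC, if_pos ⟨rfl, fun y hy => by simp_all [a, support_filter]⟩]
    have hc : diagC K t (c, c) = 1 := by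
      refine if_pos ⟨rfl, fun y hy => ?_⟩
      simp only [c, support_filter, coe_filter] at hy
      exact (hα hy.1).resolve_left hy.2
    have hchoose : ∏ y ∈ (a + c).support, (((a + c) y).choose (a y) : K) = 1 := by
      refine prod_eq_one fun y _ => ?_
      by_cases hy : y ∈ s <;> simp [a, c, hy]
    rw [diagC, if_pos ⟨rfl, hα⟩, ← hac, mulC_apply_eq_single, ha, hc, hchoose, one_mul, one_mul]
    intro q hq r _ h0
    obtain ⟨rfl, hq₁, hq₂⟩ := hterm q r h0
    obtain ⟨h₁, h₂⟩ := eq_filter_of_add_eq_of_disjoint hst ((mem_antidiagonal.1 hq).trans hac) hq₁ hq₂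
    exact ⟨Prod.ext h₁ h₂, Prod.ext h₁ h₂⟩
  · rw [diagC, if_neg h]
    refine mulC_apply_eq_zero fun q hq r hr => ?_
    by_contra h0
    obtain ⟨rfl, hq₁, hq₂⟩ := hterm q r h0
    refine h ⟨(mem_antidiagonal.1 hq).symm.trans (mem_antidiagonal.1 hr), ?_⟩
    rw [← mem_antidiagonal.1 hq]
    exact (Finset.coe_subset.2 support_add).trans (by push_cast; exact Set.union_subset_union hq₁ hq₂)

theorem foldr_mulC_expC_xTensorX [CharZero K] {l : List X} (hl : l.Nodup) :
    (l.map fun x => expC K (xTensorX K x)).foldr (mulC K) (unitC K) = diagC K {x | x ∈ l} := by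
  induction l with
  | nil => simpa using unitC_eq_diagC_empty
  | cons x l ih =>
    obtain ⟨hx, hl⟩ := List.nodup_cons.1 hl
    rw [List.map_cons, List.foldr_cons, ih hl, expC_xTensorX,
      mulC_diagC_diagC (Set.disjoint_singleton_left (s := {y | y ∈ l}).2 hx)]
    congr 1
    ext y
    simp

end


/-- The commutative specialization of Schützenberger's factorization:
`Π_{x ∈ X} exp(x ⊗ x) = Σ_{α ∈ ℕ^{(X)}} X^α ⊗ X^α`, stated coefficientwise as
convergence of the net of finite partial products to the diagonal series. -/
theorem schutzenberger_commutative (K : Type*) [Field K] [CharZero K]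
    {X : Type*} [DecidableEq X] (α β : X →₀ ℕ) :
    ∃ F : Finset X, ∀ F' : Finset X, F ⊆ F' →
      ((F'.toList.map fun x => expC K (xTensorX K x)).foldr (mulC K) (unitC K))
          (α, β) = if α = β then 1 else 0 := by
  refine ⟨α.support, fun F' hF => ?_⟩
  rw [foldr_mulC_expC_xTensorX F'.nodup_toList]
  simp [diagC, hF]
end
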